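/- arXiv:1104.0127 — 2 statements merged into one kernel-verified Lean document; each statement's English description precedes it below -/
import Mathlib

section
/- With M_σ for σ ∈ Σ defined as above, define additionally a 4×4 real matrix M_$ with row 0 = (0,0,1,0), row 1 = (0,0,0,1), row 2 = (0,0,1,0), row 3 = (0,0,0,1). Then for every finite word w = σ₁…σ_n over Σ, the row vector e₀ · M_{σ₁} ⋯ M_{σ_n} · M_$ equals (0, 0, 1 - 2^{-n}θ(w), 2^{-n}θ(w)); in particular the probability of being in the accepting absorbing state 3 after reading w followed by the end-marker is 2^{-n}θ(w). -/
open Matrix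

/-- `psi k (d₁ … d_n) = d_n/k + d_{n-1}/k² + ⋯ + d₁/kⁿ`. -/
noncomputable def psi (k : ℕ) (l : List (Fin k)) : ℝ :=
  l.foldl (fun r a => (r + (a : ℝ)) / k) 0

/-- `theta` of a word is `psi` of the concatenation of the images of its letters. -/
noncomputable def theta (k : ℕ) {S : Type*} (φ : S → List (Fin k)) (w : List S) : ℝ :=
  psi k (w.map φ).flatten

/-- The transition matrix `M_σ` of the automaton `A_i` from the PCP instance. -/
noncomputable def Mmat (k : ℕ) {S : Type*} (φ : S → List (Fin k)) (σ : S) :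
    Matrix (Fin 4) (Fin 4) ℝ :=
  !![(1/2) * (1 - psi k (φ σ)), (1/2) * psi k (φ σ), 1/2, 0;
     (1/2) * (1 - psi k (φ σ) - ((k : ℝ) ^ (φ σ).length)⁻¹),
       (1/2) * (psi k (φ σ) + ((k : ℝ) ^ (φ σ).length)⁻¹), 1/2, 0;
     0, 0, 1, 0;
     0, 0, 0, 1]

/-- The transition matrix for the end-marker `$`. -/
noncomputable def Mdollar : Matrix (Fin 4) (Fin 4) ℝ :=
  !![0, 0, 1, 0;
     0, 0, 0, 1;
     0, 0, 1, 0;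
     0, 0, 0, 1]

/-!
Reading a letter `σ` halves the mass on the states `{0, 1}`, sends the other half to the
rejecting state `2`, and, within `{0, 1}`, updates the share of state `1` by the affine map
`t ↦ t κ_σ + θ_σ`, which is exactly how `θ` grows when `φ σ` is appended:
`θ(wσ) = θ(w) κ_σ + θ_σ`. Hence after reading `w` of length `n` the distribution is
`(2⁻ⁿ(1 - θ(w)), 2⁻ⁿθ(w), 1 - 2⁻ⁿ, 0)`, and the end-marker moves state `0` to `2` and
state `1` to `3`.
-/

theorem List.foldl_add_div_eq {α K : Type*} [Field K] (f : α → K) (c x : K) (l : List α) :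
    l.foldl (fun r a => (r + f a) / c) x =
      x * (c ^ l.length)⁻¹ + l.foldl (fun r a => (r + f a) / c) 0 := by
  induction l generalizing x with
  | nil => simp
  | cons a l ih =>
    rw [List.foldl_cons, List.foldl_cons, ih, ih ((0 + f a) / c), List.length_cons, pow_succ]
    ring

-- The coercion `(a : ℝ)` in `psi` elaborates as a lift of the whole list `l` to `List ℝ`.
theorem psi_eq_foldl (k : ℕ) (l : List (Fin k)) :
    psi k l = l.foldl (fun (r : ℝ) (a : Fin k) => (r + ((a : ℕ) : ℝ)) / k) 0 := by
  simp only [psi, List.pure_def, List.bind_eq_flatMap, ← List.map_eq_flatMap, List.foldl_map]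

theorem psi_append (k : ℕ) (l₁ l₂ : List (Fin k)) :
    psi k (l₁ ++ l₂) = psi k l₁ * ((k : ℝ) ^ l₂.length)⁻¹ + psi k l₂ := by
  rw [psi_eq_foldl, psi_eq_foldl, psi_eq_foldl, List.foldl_append, List.foldl_add_div_eq]

theorem theta_append_singleton (k : ℕ) {S : Type*} (φ : S → List (Fin k)) (w : List S)
    (σ : S) :
    theta k φ (w ++ [σ]) = theta k φ w * ((k : ℝ) ^ (φ σ).length)⁻¹ + psi k (φ σ) := by
  simp only [theta, List.map_append, List.map_singleton, List.flatten_append,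
    List.flatten_singleton, psi_append]

theorem vecMul_Mmat (k : ℕ) {S : Type*} (φ : S → List (Fin k)) (σ : S) (p t : ℝ) :
    vecMul ![p * (1 - t), p * t, 1 - p, 0] (Mmat k φ σ) =
      ![p / 2 * (1 - (t * ((k : ℝ) ^ (φ σ).length)⁻¹ + psi k (φ σ))),
        p / 2 * (t * ((k : ℝ) ^ (φ σ).length)⁻¹ + psi k (φ σ)), 1 - p / 2, 0] := by
  ext i
  fin_cases i <;> simp [vecMul, dotProduct, Mmat, Fin.sum_univ_four] <;> ring

theorem vecMul_Mdollar (p t : ℝ) :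
    vecMul ![p * (1 - t), p * t, 1 - p, 0] Mdollar = ![0, 0, 1 - p * t, p * t] := by
  ext i
  fin_cases i <;> simp [vecMul, dotProduct, Mdollar, Fin.sum_univ_four]
  ring

theorem foldl_vecMul_Mmat (k : ℕ) {S : Type*} (φ : S → List (Fin k)) (w : List S) :
    w.foldl (fun v σ => vecMul v (Mmat k φ σ)) ![(1 : ℝ), 0, 0, 0] =
      ![((2 : ℝ) ^ w.length)⁻¹ * (1 - theta k φ w), ((2 : ℝ) ^ w.length)⁻¹ * theta k φ w,
        1 - ((2 : ℝ) ^ w.length)⁻¹, 0] := by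
  induction w using List.reverseRecOn with
  | nil => ext i; fin_cases i <;> simp [theta, psi]
  | append_singleton w σ ih =>
    rw [List.foldl_append, List.foldl_cons, List.foldl_nil, ih, vecMul_Mmat,
      theta_append_singleton, List.length_append, List.length_singleton, pow_succ, mul_inv,
      ← div_eq_mul_inv _ (2 : ℝ)]

theorem stmt3_general (k : ℕ) (S : Type*) (φ : S → List (Fin k)) (w : List S) :
    Matrix.vecMul
        (w.foldl (fun v σ => Matrix.vecMul v (Mmat k φ σ)) ![(1 : ℝ), 0, 0, 0]) Mdollar =
      ![0, 0, 1 - ((2 : ℝ) ^ w.length)⁻¹ * theta k φ w,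
        ((2 : ℝ) ^ w.length)⁻¹ * theta k φ w] := by
  rw [foldl_vecMul_Mmat, vecMul_Mdollar]

theorem stmt3 (k : ℕ) (hk : 2 ≤ k) (S : Type*) (φ : S → List (Fin k)) (w : List S) :
    Matrix.vecMul
        (w.foldl (fun v σ => Matrix.vecMul v (Mmat k φ σ)) ![(1 : ℝ), 0, 0, 0]) Mdollar =
      ![0, 0, 1 - ((2 : ℝ) ^ w.length)⁻¹ * theta k φ w,
        ((2 : ℝ) ^ w.length)⁻¹ * theta k φ w] :=
  stmt3_general k S φ w
end

section
/- Let M : Σ → Matrix Q Q ℝ be row-stochastic, C ⊆ Q with (M_σ)_{q,q} = 1 for every q ∈ C and σ ∈ Σ, and suppose there exists η > 0 with ∑_{q' ∈ C} (M_σ)_{q,q'} ≥ η for all σ ∈ Σ, q ∈ Q. Let F ⊆ Q with Q∖F ⊆ C and q₀ ∈ F. Then for every infinite word w : ℕ → Σ, the sequence n ↦ ∑_{q ∈ F∩C} (e_{q₀} · M_{w₀} · ⋯ · M_{w_{n-1}})_q is nondecreasing and converges to Safe_F(w); i.e., the probability of staying in F forever equals the probability of reaching the absorbing accepting states F∩C.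 -/
/-!
The complement of `F` lies in the absorbing set `C`, so a run that leaves `F` never returns:
on `F` the chain killed outside `F` agrees with the free chain, and the safety sequence is the
mass of `F`. That mass splits into the mass of `F ∩ C`, which can only grow since `C` is
absorbing, and the mass of `F \ C ⊆ Cᶜ`, which shrinks geometrically because every step moves
at least `η` of the mass outside `C` into the trap `C`.
-/

open Matrix Filter

/-- The sub-stochastic matrix obtained from `M` by zeroing out all columns outside `F`. -/
noncomputable def subMat {Q : Type*} [DecidableEq Q] (M : Matrix Q Q ℝ) (F : Finset Q) :
    Matrix Q Q ℝ :=
  Matrix.of fun q q' => if q' ∈ F then M q q' else 0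

/-- The state distribution after reading the first `n` letters of `w`, starting at `q₀`. -/
noncomputable def wordDist {Q : Type*} [Fintype Q] [DecidableEq Q] {S : Type*}
    (M : S → Matrix Q Q ℝ) (q₀ : Q) (w : ℕ → S) (n : ℕ) : Q → ℝ :=
  (List.range n).foldl (fun v i => Matrix.vecMul v (M (w i))) (Pi.single q₀ 1)

/-- The probability of staying inside `F` during the first `n` steps while reading `w`. -/
noncomputable def safeSeq {Q : Type*} [Fintype Q] [DecidableEq Q] {S : Type*}
    (M : S → Matrix Q Q ℝ) (F : Finset Q) (q₀ : Q) (w : ℕ → S) (n : ℕ) : ℝ :=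
  ∑ q, ((List.range n).foldl (fun v i => Matrix.vecMul v (subMat (M (w i)) F))
    (Pi.single q₀ 1)) q

/-- The safety value of `w`: the probability of staying in `F` forever. -/
noncomputable def safeVal {Q : Type*} [Fintype Q] [DecidableEq Q] {S : Type*}
    (M : S → Matrix Q Q ℝ) (F : Finset Q) (q₀ : Q) (w : ℕ → S) : ℝ :=
  ⨅ n : ℕ, safeSeq M F q₀ w n

open Finset Topology

def IsTrap {Q S : Type*} (M : S → Matrix Q Q ℝ) (D : Finset Q) : Prop :=
  ∀ σ, ∀ p ∈ D, ∀ q ∉ D, M σ p q = 0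

section

variable {Q : Type*} [DecidableEq Q]

lemma subMat_apply_of_mem (A : Matrix Q Q ℝ) {F : Finset Q} (p : Q) {q : Q} (hq : q ∈ F) :
    subMat A F p q = A p q := if_pos hq

lemma subMat_apply_of_notMem (A : Matrix Q Q ℝ) {F : Finset Q} (p : Q) {q : Q} (hq : q ∉ F) :
    subMat A F p q = 0 := if_neg hq

lemma subMat_nonneg {A : Matrix Q Q ℝ} (hA : ∀ p q, 0 ≤ A p q) (F : Finset Q) (p q : Q) :
    0 ≤ subMat A F p q := by
  by_cases hq : q ∈ F
  · rw [subMat_apply_of_mem A p hq]; exact hA p q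
  · rw [subMat_apply_of_notMem A p hq]

end

section

variable {Q : Type*} [Fintype Q]

lemma sum_vecMul_le_sum {v : Q → ℝ} {N : Matrix Q Q ℝ} (hv : ∀ p, 0 ≤ v p)
    (hN : ∀ p, ∑ q, N p q ≤ 1) : ∑ q, vecMul v N q ≤ ∑ p, v p :=
  calc ∑ q, vecMul v N q = ∑ p, v p * ∑ q, N p q := by
        simp only [vecMul, dotProduct, mul_sum]
        exact sum_comm
    _ ≤ ∑ p, v p * 1 := sum_le_sum fun p _ => mul_le_mul_of_nonneg_left (hN p) (hv p)
    _ = ∑ p, v p := by simp only [mul_one]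

variable [DecidableEq Q] {S : Type*}

lemma apply_eq_zero_of_sum_eq_one_of_apply_eq_one {r : Q → ℝ} (hr : ∀ q, 0 ≤ r q)
    (hsum : ∑ q, r q = 1) {q : Q} (hq : r q = 1) {q' : Q} (hne : q' ≠ q) : r q' = 0 := by
  have hrest : ∑ p ∈ univ.erase q, r p = 0 := by
    linarith [add_sum_erase univ r (mem_univ q)]
  exact (sum_eq_zero_iff_of_nonneg fun p _ => hr p).1 hrest q' (mem_erase.2 ⟨hne, mem_univ q'⟩)

lemma isTrap_of_diag_eq_one {M : S → Matrix Q Q ℝ} (hnn : ∀ σ p q, 0 ≤ M σ p q)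
    (hrow : ∀ σ p, ∑ q, M σ p q = 1) {D : Finset Q} (hD : ∀ p ∈ D, ∀ σ, M σ p p = 1) :
    IsTrap M D := fun σ p hp q hq =>
  apply_eq_zero_of_sum_eq_one_of_apply_eq_one (hnn σ p) (hrow σ p) (hD p hp σ)
    (by rintro rfl; exact hq hp)

lemma sum_subMat_row_le_one {A : Matrix Q Q ℝ} (hA : ∀ p q, 0 ≤ A p q)
    (hrow : ∀ p, ∑ q, A p q = 1) (F : Finset Q) (p : Q) : ∑ q, subMat A F p q ≤ 1 :=
  calc ∑ q, subMat A F p q = ∑ q ∈ F, A p q := by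
        simp [subMat, sum_ite_mem]
    _ ≤ ∑ q, A p q := sum_le_univ_sum_of_nonneg (hA p)
    _ = 1 := hrow p

variable (M : S → Matrix Q Q ℝ) (q₀ : Q) (w : ℕ → S)

lemma wordDist_zero : wordDist M q₀ w 0 = Pi.single q₀ 1 := rfl

lemma wordDist_succ (n : ℕ) :
    wordDist M q₀ w (n + 1) = vecMul (wordDist M q₀ w n) (M (w n)) := by
  rw [wordDist, List.range_succ, List.foldl_append]
  rfl

lemma wordDist_succ_apply (n : ℕ) (q : Q) :
    wordDist M q₀ w (n + 1) q = ∑ p, wordDist M q₀ w n p * M (w n) p q := by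
  rw [wordDist_succ]
  rfl

lemma sum_wordDist_succ (T : Finset Q) (n : ℕ) :
    ∑ q ∈ T, wordDist M q₀ w (n + 1) q =
      ∑ p, wordDist M q₀ w n p * ∑ q ∈ T, M (w n) p q := by
  simp only [wordDist_succ_apply, mul_sum]
  exact sum_comm

variable {M}

lemma wordDist_nonneg (hnn : ∀ σ p q, 0 ≤ M σ p q) (n : ℕ) (q : Q) :
    0 ≤ wordDist M q₀ w n q := by
  induction n generalizing q with
  | zero =>
    rw [wordDist_zero, Pi.single_apply]
    split_ifs <;> norm_num
  | succ n ih =>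
    rw [wordDist_succ_apply]
    exact sum_nonneg fun p _ => mul_nonneg (ih p) (hnn _ p q)

lemma wordDist_le_wordDist_succ (hnn : ∀ σ p q, 0 ≤ M σ p q) {n : ℕ} {q : Q}
    (hq : M (w n) q q = 1) : wordDist M q₀ w n q ≤ wordDist M q₀ w (n + 1) q := by
  rw [wordDist_succ_apply]
  calc wordDist M q₀ w n q = wordDist M q₀ w n q * M (w n) q q := by rw [hq, mul_one]
    _ ≤ ∑ p, wordDist M q₀ w n p * M (w n) p q :=
        single_le_sum (fun p _ => mul_nonneg (wordDist_nonneg q₀ w hnn n p) (hnn _ p q))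
          (mem_univ q)

lemma IsTrap.sum_compl_wordDist_succ {D : Finset Q} (hD : IsTrap M D) (n : ℕ) :
    ∑ q ∈ Dᶜ, wordDist M q₀ w (n + 1) q =
      ∑ p ∈ Dᶜ, wordDist M q₀ w n p * ∑ q ∈ Dᶜ, M (w n) p q := by
  rw [sum_wordDist_succ]
  refine (sum_subset (subset_univ _) fun p _ hp => ?_).symm
  rw [sum_eq_zero fun q hq => hD _ p (by simpa using hp) q (mem_compl.1 hq), mul_zero]

lemma IsTrap.sum_compl_wordDist_le_pow (hnn : ∀ σ p q, 0 ≤ M σ p q) {D : Finset Q}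
    (hD : IsTrap M D) {r : ℝ} (hr : 0 ≤ r) (hstay : ∀ σ, ∀ p ∉ D, ∑ q ∈ Dᶜ, M σ p q ≤ r)
    (n : ℕ) : ∑ q ∈ Dᶜ, wordDist M q₀ w n q ≤ r ^ n := by
  induction n with
  | zero =>
    rw [wordDist_zero, sum_pi_single', pow_zero]
    split_ifs <;> norm_num
  | succ n ih =>
    calc ∑ q ∈ Dᶜ, wordDist M q₀ w (n + 1) q
        = ∑ p ∈ Dᶜ, wordDist M q₀ w n p * ∑ q ∈ Dᶜ, M (w n) p q :=
          hD.sum_compl_wordDist_succ q₀ w n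
      _ ≤ ∑ p ∈ Dᶜ, wordDist M q₀ w n p * r :=
          sum_le_sum fun p hp => mul_le_mul_of_nonneg_left (hstay _ p (mem_compl.1 hp))
            (wordDist_nonneg q₀ w hnn n p)
      _ = (∑ p ∈ Dᶜ, wordDist M q₀ w n p) * r := (sum_mul ..).symm
      _ ≤ r ^ n * r := mul_le_mul_of_nonneg_right ih hr
      _ = r ^ (n + 1) := (pow_succ r n).symm

variable (M)

lemma safeSeq_eq_sum_wordDist_subMat (F : Finset Q) (n : ℕ) :
    safeSeq M F q₀ w n = ∑ q, wordDist (fun σ => subMat (M σ) F) q₀ w n q := rfl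

variable {M}

lemma wordDist_subMat_apply_of_notMem {F : Finset Q} (hq₀ : q₀ ∈ F) (n : ℕ) {q : Q}
    (hq : q ∉ F) : wordDist (fun σ => subMat (M σ) F) q₀ w n q = 0 := by
  cases n with
  | zero => exact Pi.single_eq_of_ne (by rintro rfl; exact hq hq₀) 1
  | succ n =>
    rw [wordDist_succ_apply]
    exact sum_eq_zero fun p _ => by rw [subMat_apply_of_notMem _ p hq, mul_zero]

lemma IsTrap.wordDist_subMat_apply {F : Finset Q} (hF : IsTrap M Fᶜ) (n : ℕ) {q : Q}
    (hq : q ∈ F) : wordDist (fun σ => subMat (M σ) F) q₀ w n q = wordDist M q₀ w n q := by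
  induction n generalizing q with
  | zero => rfl
  | succ n ih =>
    simp only [wordDist_succ_apply, subMat_apply_of_mem _ _ hq]
    refine sum_congr rfl fun p _ => ?_
    by_cases hp : p ∈ F
    · rw [ih hp]
    · rw [hF _ p (mem_compl.2 hp) q (by simpa using hq), mul_zero, mul_zero]

lemma IsTrap.safeSeq_eq_sum_wordDist {F : Finset Q} (hF : IsTrap M Fᶜ) (hq₀ : q₀ ∈ F)
    (n : ℕ) : safeSeq M F q₀ w n = ∑ q ∈ F, wordDist M q₀ w n q := by
  rw [safeSeq_eq_sum_wordDist_subMat,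
    ← sum_subset (subset_univ F) fun q _ hq => wordDist_subMat_apply_of_notMem q₀ w hq₀ n hq]
  exact sum_congr rfl fun q hq => hF.wordDist_subMat_apply q₀ w n hq

lemma tendsto_safeSeq_safeVal (hnn : ∀ σ p q, 0 ≤ M σ p q) (hrow : ∀ σ p, ∑ q, M σ p q = 1)
    (F : Finset Q) : Tendsto (safeSeq M F q₀ w) atTop (𝓝 (safeVal M F q₀ w)) := by
  have hsub_nn : ∀ σ p q, 0 ≤ subMat (M σ) F p q := fun σ => subMat_nonneg (hnn σ) F
  have hanti : Antitone (safeSeq M F q₀ w) := antitone_nat_of_succ_le fun n => by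
    simp only [safeSeq_eq_sum_wordDist_subMat, wordDist_succ]
    exact sum_vecMul_le_sum (wordDist_nonneg q₀ w hsub_nn n)
      (sum_subMat_row_le_one (hnn _) (hrow _) F)
  refine tendsto_atTop_ciInf hanti ⟨0, ?_⟩
  rintro _ ⟨n, rfl⟩
  exact sum_nonneg fun q _ => wordDist_nonneg q₀ w hsub_nn n q

end

theorem stmt8_general {Q : Type*} [Fintype Q] [DecidableEq Q] {S : Type*}
    (M : S → Matrix Q Q ℝ)
    (hnn : ∀ σ q q', 0 ≤ M σ q q') (hrow : ∀ σ q, ∑ q', M σ q q' = 1)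
    (C : Finset Q) (habs : ∀ q ∈ C, ∀ σ, M σ q q = 1)
    (η : ℝ) (hη : 0 < η) (hmin : ∀ σ q, η ≤ ∑ q' ∈ C, M σ q q')
    (F : Finset Q) (hFC : Fᶜ ⊆ C) (q₀ : Q) (hq₀ : q₀ ∈ F) (w : ℕ → S) :
    Monotone (fun n => ∑ q ∈ F ∩ C, wordDist M q₀ w n q) ∧
      Tendsto (fun n => ∑ q ∈ F ∩ C, wordDist M q₀ w n q) atTop
        (nhds (safeVal M F q₀ w)) := by
  have hC : IsTrap M C := isTrap_of_diag_eq_one hnn hrow habs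
  have hF : IsTrap M Fᶜ := isTrap_of_diag_eq_one hnn hrow fun q hq => habs q (hFC hq)
  have hstay : ∀ σ p, ∑ q ∈ Cᶜ, M σ p q ≤ 1 - η := fun σ p => by
    linarith [sum_add_sum_compl C (M σ p), hmin σ p, hrow σ p]
  have hη1 : 0 ≤ 1 - η :=
    (sum_nonneg fun q _ => hnn (w 0) q₀ q).trans (hstay (w 0) q₀)
  have hescape : Tendsto (fun n => ∑ q ∈ F \ C, wordDist M q₀ w n q) atTop (𝓝 0) := by
    refine squeeze_zero (fun n => sum_nonneg fun q _ => wordDist_nonneg q₀ w hnn n q)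
      (fun n => ?_) (tendsto_pow_atTop_nhds_zero_of_lt_one hη1 (by linarith))
    refine (sum_le_sum_of_subset_of_nonneg (fun q hq => mem_compl.2 (mem_sdiff.1 hq).2)
      fun q _ _ => wordDist_nonneg q₀ w hnn n q).trans ?_
    exact hC.sum_compl_wordDist_le_pow q₀ w hnn hη1 (fun σ p _ => hstay σ p) n
  refine ⟨monotone_nat_of_le_succ fun n => sum_le_sum fun q hq =>
    wordDist_le_wordDist_succ q₀ w hnn (habs q (mem_inter.1 hq).2 _), ?_⟩
  have hlim := (tendsto_safeSeq_safeVal q₀ w hnn hrow F).sub hescape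
  rw [sub_zero] at hlim
  refine hlim.congr fun n => ?_
  rw [hF.safeSeq_eq_sum_wordDist q₀ w hq₀, ← sum_inter_add_sum_sdiff F C]
  ring

theorem stmt8 {Q : Type*} [Fintype Q] [DecidableEq Q] [Nonempty Q] {S : Type*}
    (M : S → Matrix Q Q ℝ)
    (hnn : ∀ σ q q', 0 ≤ M σ q q') (hrow : ∀ σ q, ∑ q', M σ q q' = 1)
    (C : Finset Q) (habs : ∀ q ∈ C, ∀ σ, M σ q q = 1)
    (η : ℝ) (hη : 0 < η) (hmin : ∀ σ q, η ≤ ∑ q' ∈ C, M σ q q')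
    (F : Finset Q) (hFC : Fᶜ ⊆ C) (q₀ : Q) (hq₀ : q₀ ∈ F) (w : ℕ → S) :
    Monotone (fun n => ∑ q ∈ F ∩ C, wordDist M q₀ w n q) ∧
      Tendsto (fun n => ∑ q ∈ F ∩ C, wordDist M q₀ w n q) atTop
        (nhds (safeVal M F q₀ w)) :=
  stmt8_general M hnn hrow C habs η hη hmin F hFC q₀ hq₀ w
end
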